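/- arXiv:2204.11744 — 3 statements merged into one kernel-verified Lean document; each statement's English description precedes it below -/
import Mathlib

section
/- Consider the coupled ODE system u'(t) = W u(t) + L f(x(t)), x'(t) = Lᵀ u(t), where u : ℝ → ℝᵖ, x : ℝ → ℝˡ, W is a p×p real matrix, L is a p×l real matrix, and f(x) = -∇E(x) for a differentiable nonnegative energy functional E : ℝˡ → ℝ. If W + Wᵀ is negative semi-definite, then the Lyapunov functional V(u,x) = ½‖u‖² + E(x) is non-increasing along every solution, i.e., d/dt V(u(t), x(t)) ≤ 0. -/
open Matrix

/-! The time derivative of `V = ½ ‖u‖² + E(x)` along a solution is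
`⟨u, W u + L f(x)⟩ + ⟨∇E(x), Lᵀ u⟩ = ⟨u, W u⟩ + ⟨Lᵀ u, f(x)⟩ - ⟨f(x), Lᵀ u⟩ = ½ ⟨u, (W + Wᵀ) u⟩`:
the coupling terms through `L` cancel exactly, leaving only the quadratic form of `W + Wᵀ`. -/

theorem HasDerivAt.dotProduct {𝕜 ι : Type*} [NontriviallyNormedField 𝕜] [Fintype ι]
    {u v : 𝕜 → ι → 𝕜} {u' v' : ι → 𝕜} {t : 𝕜}
    (hu : HasDerivAt u u' t) (hv : HasDerivAt v v' t) :
    HasDerivAt (fun s => u s ⬝ᵥ v s) (u' ⬝ᵥ v t + u t ⬝ᵥ v') t := by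
  have hcoord : ∀ i, HasDerivAt (fun s => u s i * v s i) (u' i * v t i + u t i * v' i) t :=
    fun i => (hasDerivAt_pi.1 hu i).mul (hasDerivAt_pi.1 hv i)
  have hsum := HasDerivAt.fun_sum (u := Finset.univ) fun i _ => hcoord i
  rw [Finset.sum_add_distrib] at hsum
  exact hsum

theorem Matrix.dotProduct_add_transpose_mulVec_self {n R : Type*} [Fintype n] [CommSemiring R]
    (A : Matrix n n R) (v : n → R) :
    v ⬝ᵥ (A + Aᵀ) *ᵥ v = 2 * (v ⬝ᵥ A *ᵥ v) := by
  rw [add_mulVec, dotProduct_add, dotProduct_transpose_mulVec, two_mul]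

theorem hasDerivAt_half_sq_add_comp {ι F : Type*} [Fintype ι]
    [NormedAddCommGroup F] [NormedSpace ℝ F] {E : F → ℝ}
    {u : ℝ → ι → ℝ} {x : ℝ → F} {u' : ι → ℝ} {x' : F} {t : ℝ}
    (hu : HasDerivAt u u' t) (hx : HasDerivAt x x' t) (hE : DifferentiableAt ℝ E (x t)) :
    HasDerivAt (fun s => (1 / 2 : ℝ) * (u s ⬝ᵥ u s) + E (x s))
      (u t ⬝ᵥ u' + fderiv ℝ E (x t) x') t := by
  have hsq := (hu.dotProduct hu).const_mul (1 / 2 : ℝ)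
  have hEx := hE.hasFDerivAt.comp_hasDerivAt t hx
  refine (hsq.add hEx).congr_deriv ?_
  rw [dotProduct_comm u']
  ring

theorem hasDerivAt_lyapunov {m n : Type*} [Fintype m] [Fintype n]
    (W : Matrix m m ℝ) (L : Matrix m n ℝ) {E : (n → ℝ) → ℝ} {f : (n → ℝ) → n → ℝ}
    (hf : ∀ x v, f x ⬝ᵥ v = -(fderiv ℝ E x v))
    {u : ℝ → m → ℝ} {x : ℝ → n → ℝ} {t : ℝ}
    (hu : HasDerivAt u (W *ᵥ u t + L *ᵥ f (x t)) t) (hx : HasDerivAt x (Lᵀ *ᵥ u t) t)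
    (hE : DifferentiableAt ℝ E (x t)) :
    HasDerivAt (fun s => (1 / 2 : ℝ) * (u s ⬝ᵥ u s) + E (x s))
      ((1 / 2 : ℝ) * (u t ⬝ᵥ (W + Wᵀ) *ᵥ u t)) t := by
  convert hasDerivAt_half_sq_add_comp hu hx hE using 1
  have hcoupling : u t ⬝ᵥ L *ᵥ f (x t) = f (x t) ⬝ᵥ Lᵀ *ᵥ u t :=
    (dotProduct_transpose_mulVec L (f (x t)) (u t)).symm
  have hgrad : fderiv ℝ E (x t) (Lᵀ *ᵥ u t) = -(f (x t) ⬝ᵥ Lᵀ *ᵥ u t) := by rw [hf, neg_neg]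
  rw [dotProduct_add_transpose_mulVec_self, dotProduct_add, hcoupling, hgrad]
  ring

theorem stmt_0_general {p l : ℕ}
    (W : Matrix (Fin p) (Fin p) ℝ) (L : Matrix (Fin p) (Fin l) ℝ)
    (E : (Fin l → ℝ) → ℝ) (f : (Fin l → ℝ) → (Fin l → ℝ))
    (hE : Differentiable ℝ E)
    (hf : ∀ x v, f x ⬝ᵥ v = -(fderiv ℝ E x v))
    (hW : ∀ v : Fin p → ℝ, v ⬝ᵥ (W + Wᵀ).mulVec v ≤ 0)
    (u : ℝ → Fin p → ℝ) (x : ℝ → Fin l → ℝ)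
    (u' : ℝ → Fin p → ℝ) (x' : ℝ → Fin l → ℝ)
    (hu : ∀ t, HasDerivAt u (u' t) t) (hx : ∀ t, HasDerivAt x (x' t) t)
    (hode1 : ∀ t, u' t = W.mulVec (u t) + L.mulVec (f (x t)))
    (hode2 : ∀ t, x' t = Lᵀ.mulVec (u t))
    (t : ℝ) :
    deriv (fun s => (1 / 2 : ℝ) * (u s ⬝ᵥ u s) + E (x s)) t ≤ 0 := by
  have hV := hasDerivAt_lyapunov W L hf (hode1 t ▸ hu t) (hode2 t ▸ hx t) (hE (x t))
  rw [hV.deriv]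
  exact mul_nonpos_of_nonneg_of_nonpos (by norm_num) (hW (u t))

/-- Stability of the coupled latent-variable ODE system (Theorem 2.1):
if `W + Wᵀ` is negative semi-definite and `f = -∇E` with `E ≥ 0`, then the
Lyapunov functional `V = ½‖u‖² + E(x)` is non-increasing along solutions. -/
theorem stmt_0 {p l : ℕ}
    (W : Matrix (Fin p) (Fin p) ℝ) (L : Matrix (Fin p) (Fin l) ℝ)
    (E : (Fin l → ℝ) → ℝ) (f : (Fin l → ℝ) → (Fin l → ℝ))
    (hE : Differentiable ℝ E) (hEnn : ∀ x, 0 ≤ E x)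
    (hf : ∀ x v, f x ⬝ᵥ v = -(fderiv ℝ E x v))
    (hW : ∀ v : Fin p → ℝ, v ⬝ᵥ (W + Wᵀ).mulVec v ≤ 0)
    (u : ℝ → Fin p → ℝ) (x : ℝ → Fin l → ℝ)
    (u' : ℝ → Fin p → ℝ) (x' : ℝ → Fin l → ℝ)
    (hu : ∀ t, HasDerivAt u (u' t) t) (hx : ∀ t, HasDerivAt x (x' t) t)
    (hode1 : ∀ t, u' t = W.mulVec (u t) + L.mulVec (f (x t)))
    (hode2 : ∀ t, x' t = Lᵀ.mulVec (u t))
    (t : ℝ) :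
    deriv (fun s => (1 / 2 : ℝ) * (u s ⬝ᵥ u s) + E (x s)) t ≤ 0 :=
  stmt_0_general W L E f hE hf hW u x u' x' hu hx hode1 hode2 t
end

section
/- Let D be a diagonal negative semi-definite p×p matrix, S a skew-symmetric p×p matrix, R a p×l matrix, and T a symmetric positive semi-definite l×l matrix. Consider the discrete dynamics given by the implicit midpoint scheme applied to z' = (D+S)z - R T x, x' = Rᵀ z with step Δt > 0: z_{i+1} = z_i + (Δt/2)(D+S)(z_i + z_{i+1}) - Δt R T (x_i + x_{i+1})/2, x_{i+1} = x_i + (Δt/2) Rᵀ(z_i + z_{i+1}). Then V(z, x) = ½‖z‖² + ½⟨x, T x⟩ is non-increasing: V(z_{i+1}, x_{i+1}) ≤ V(z_i, x_i). -/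
open Matrix

/-- Theorem 2.4 (linear-force case): the implicit midpoint discretization of
`z' = (D+S)z - RTx`, `x' = Rᵀz` is non-increasing for the Lyapunov functional
`V(z,x) = ½‖z‖² + ½⟨x, Tx⟩`. -/
theorem stmt_7 {p l : ℕ}
    (D S : Matrix (Fin p) (Fin p) ℝ) (R : Matrix (Fin p) (Fin l) ℝ)
    (T : Matrix (Fin l) (Fin l) ℝ)
    (hD : D.IsDiag) (hDneg : ∀ i, D i i ≤ 0) (hS : Sᵀ = -S)
    (hT : Tᵀ = T) (hTpsd : ∀ v : Fin l → ℝ, 0 ≤ v ⬝ᵥ T.mulVec v)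
    (Δt : ℝ) (hΔt : 0 < Δt)
    (zi zi1 : Fin p → ℝ) (xi xi1 : Fin l → ℝ)
    (hz : zi1 = zi + (Δt / 2) • (D + S).mulVec (zi + zi1)
            - Δt • (R * T).mulVec ((1 / 2 : ℝ) • (xi + xi1)))
    (hx : xi1 = xi + (Δt / 2) • Rᵀ.mulVec (zi + zi1)) :
    (1 / 2 : ℝ) * (zi1 ⬝ᵥ zi1) + (1 / 2 : ℝ) * (xi1 ⬝ᵥ T.mulVec xi1)
      ≤ (1 / 2 : ℝ) * (zi ⬝ᵥ zi) + (1 / 2 : ℝ) * (xi ⬝ᵥ T.mulVec xi) := by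
  set w := zi + zi1 with hw
  set u := xi + xi1 with hu
  -- skew part vanishes
  have hSkew : w ⬝ᵥ S.mulVec w = 0 := by
    have h1 : w ⬝ᵥ S.mulVec w = Sᵀ.mulVec w ⬝ᵥ w := by
      rw [Matrix.dotProduct_mulVec, Matrix.mulVec_transpose]
    rw [hS, Matrix.neg_mulVec, neg_dotProduct] at h1
    have h2 := dotProduct_comm w (S.mulVec w)
    linarith
  -- diagonal part nonpositive
  have hDiag : w ⬝ᵥ D.mulVec w ≤ 0 := by
    have hmv : ∀ j, D.mulVec w j = D j j * w j := by
      intro j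
      simp only [Matrix.mulVec, dotProduct]
      rw [Finset.sum_eq_single j]
      · intro k _ hk
        rw [hD (Ne.symm hk), zero_mul]
      · simp
    have : w ⬝ᵥ D.mulVec w = ∑ j, D j j * (w j * w j) := by
      simp only [dotProduct]
      refine Finset.sum_congr rfl fun j _ => ?_
      rw [hmv j]; ring
    rw [this]
    apply Finset.sum_nonpos
    intro j _
    exact mul_nonpos_of_nonpos_of_nonneg (hDneg j) (mul_self_nonneg _)
  -- adjoint relation
  have hAdj : w ⬝ᵥ (R * T).mulVec u = Rᵀ.mulVec w ⬝ᵥ T.mulVec u := by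
    rw [← Matrix.mulVec_mulVec, Matrix.dotProduct_mulVec, ← Matrix.mulVec_transpose]
  -- symmetry of T in dot products
  have hTsym : ∀ a b : Fin l → ℝ, a ⬝ᵥ T.mulVec b = b ⬝ᵥ T.mulVec a := by
    intro a b
    rw [Matrix.dotProduct_mulVec, ← Matrix.mulVec_transpose, hT, dotProduct_comm]
  -- energy differences
  have hz' : zi1 - zi = (Δt/2) • (D.mulVec w + S.mulVec w) - (Δt/2) • (R * T).mulVec u := by
    rw [Matrix.mulVec_smul] at hz
    rw [← Matrix.add_mulVec] at *
    rw [hz]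
    funext j
    simp [Matrix.add_mulVec]
    ring
  have hx' : xi1 - xi = (Δt/2) • Rᵀ.mulVec w := by
    rw [hx]; funext j; simp
  have E1 : zi1 ⬝ᵥ zi1 - zi ⬝ᵥ zi = (zi1 - zi) ⬝ᵥ w := by
    rw [hw]
    simp [sub_dotProduct, dotProduct_add]
    rw [dotProduct_comm zi1 zi]
    ring
  have E2 : xi1 ⬝ᵥ T.mulVec xi1 - xi ⬝ᵥ T.mulVec xi = (xi1 - xi) ⬝ᵥ T.mulVec u := by
    rw [hu]
    simp [sub_dotProduct, Matrix.mulVec_add, dotProduct_add]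
    rw [hTsym xi xi1]
    ring
  rw [hz'] at E1
  rw [hx'] at E2
  simp only [sub_dotProduct, smul_dotProduct, add_dotProduct,
    smul_eq_mul] at E1 E2
  rw [dotProduct_comm (D.mulVec w) w, dotProduct_comm (S.mulVec w) w,
    dotProduct_comm ((R * T).mulVec u) w] at E1
  rw [hAdj] at E1
  nlinarith [hΔt, hSkew, hDiag]
end

section
/- Let D be diagonal negative semi-definite, S skew-symmetric (both p×p), R ∈ ℝ^{p×l}, T ∈ ℝ^{l×l} symmetric positive semi-definite. All eigenvalues of the (p+l)×(p+l) block matrix A = [[D+S, -R T], [Rᵀ, 0]] have nonpositive real parts. -/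
open Matrix

set_option maxRecDepth 8000

/-- All eigenvalues of the block matrix `A = [[D+S, -RT], [Rᵀ, 0]]` have
nonpositive real parts, when `D` is diagonal negative semi-definite, `S` is
skew-symmetric and `T` is symmetric positive semi-definite. -/
theorem stmt_16 {p l : ℕ}
    (D S : Matrix (Fin p) (Fin p) ℝ) (R : Matrix (Fin p) (Fin l) ℝ)
    (T : Matrix (Fin l) (Fin l) ℝ)
    (hD : D.IsDiag) (hDneg : ∀ i, D i i ≤ 0) (hS : Sᵀ = -S)
    (hT : Tᵀ = T) (hTpsd : ∀ v : Fin l → ℝ, 0 ≤ v ⬝ᵥ T.mulVec v) :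
    let A : Matrix (Fin p ⊕ Fin l) (Fin p ⊕ Fin l) ℝ :=
      Matrix.fromBlocks (D + S) (-(R * T)) Rᵀ 0
    ∀ (μ : ℂ) (v : Fin p ⊕ Fin l → ℂ), v ≠ 0 →
      (A.map (Complex.ofReal)).mulVec v = μ • v → μ.re ≤ 0 := by
  intro A μ v hv hAv
  set Dc : Matrix (Fin p) (Fin p) ℂ := D.map Complex.ofReal with hDc
  set Sc : Matrix (Fin p) (Fin p) ℂ := S.map Complex.ofReal with hSc
  set Rc : Matrix (Fin p) (Fin l) ℂ := R.map Complex.ofReal with hRc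
  set Tc : Matrix (Fin l) (Fin l) ℂ := T.map Complex.ofReal with hTc
  set zc : Fin p → ℂ := fun i => v (Sum.inl i) with hzc
  set xc : Fin l → ℂ := fun j => v (Sum.inr j) with hxc
  have hvel : v = Sum.elim zc xc := by funext i; cases i <;> rfl
  have hAmap : A.map Complex.ofReal
      = Matrix.fromBlocks (Dc + Sc) (-(Rc * Tc)) Rcᵀ 0 := by
    have h1 : (D + S).map Complex.ofReal = Dc + Sc := by
      ext i j; simp [Dc, Sc, Matrix.map_apply]
    have h2 : (-(R * T)).map Complex.ofReal = -(Rc * Tc) := by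
      ext i j
      simp [Rc, Tc, Matrix.map_apply, Matrix.mul_apply]
    have h3 : (Rᵀ).map Complex.ofReal = Rcᵀ := by
      ext i j; simp [Rc, Matrix.map_apply]
    have h4 : (0 : Matrix (Fin l) (Fin l) ℝ).map Complex.ofReal = 0 := by
      ext i j; simp [Matrix.map_apply]
    show (Matrix.fromBlocks (D + S) (-(R * T)) Rᵀ 0).map Complex.ofReal = _
    rw [Matrix.fromBlocks_map, h1, h2, h3, h4]
  rw [hvel, hAmap] at hAv
  rw [Matrix.fromBlocks_mulVec] at hAv
  have e1 : (Dc + Sc) *ᵥ zc + (-(Rc * Tc)) *ᵥ xc = μ • zc := by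
    funext i; simpa using congrFun hAv (Sum.inl i)
  have e2 : Rcᵀ *ᵥ zc = μ • xc := by
    funext j; simpa using congrFun hAv (Sum.inr j)
  clear hAv
  -- quadratic form identities
  have hz1 : star zc ⬝ᵥ ((Dc + Sc) *ᵥ zc) - star zc ⬝ᵥ ((Rc * Tc) *ᵥ xc)
      = μ * (star zc ⬝ᵥ zc) := by
    have h := congrArg (fun w => star zc ⬝ᵥ w) e1
    simp only [Matrix.neg_mulVec, dotProduct_add, dotProduct_neg,
      dotProduct_smul, smul_eq_mul] at h
    linear_combination h
  have hRcH : (Rcᵀ)ᴴ = Rc := by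
    ext i j
    simp [Matrix.conjTranspose_apply, Rc, Matrix.map_apply]
  have hx1 : (starRingEnd ℂ) μ * (star xc ⬝ᵥ (Tc *ᵥ xc))
      = star zc ⬝ᵥ ((Rc * Tc) *ᵥ xc) := by
    have h := congrArg (fun w => star w ⬝ᵥ (Tc *ᵥ xc)) e2
    simp only [Matrix.star_mulVec, hRcH, star_smul] at h
    rw [← Matrix.dotProduct_mulVec, Matrix.mulVec_mulVec] at h
    rw [smul_dotProduct, smul_eq_mul] at h
    rw [starRingEnd_apply]
    exact h.symm
  have key : μ * (star zc ⬝ᵥ zc) + (starRingEnd ℂ) μ * (star xc ⬝ᵥ (Tc *ᵥ xc))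
      = star zc ⬝ᵥ (Dc *ᵥ zc) + star zc ⬝ᵥ (Sc *ᵥ zc) := by
    rw [← hz1, hx1, Matrix.add_mulVec, dotProduct_add]
    ring
  -- the S term is purely imaginary
  have hSim : (star zc ⬝ᵥ (Sc *ᵥ zc)).re = 0 := by
    have hScH : Scᴴ = -Sc := by
      ext i j
      have hs : S j i = -S i j := by
        have := congrFun (congrFun hS i) j
        simpa [Matrix.transpose_apply] using this
      simp [Matrix.conjTranspose_apply, Sc, Matrix.map_apply, hs]
    have hstar : star (star zc ⬝ᵥ (Sc *ᵥ zc)) = -(star zc ⬝ᵥ (Sc *ᵥ zc)) := by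
      calc star (star zc ⬝ᵥ (Sc *ᵥ zc))
          = star (Sc *ᵥ zc) ⬝ᵥ zc := by rw [star_dotProduct]; simp
        _ = (star zc ᵥ* Scᴴ) ⬝ᵥ zc := by rw [Matrix.star_mulVec]
        _ = star zc ⬝ᵥ (Scᴴ *ᵥ zc) := by rw [Matrix.dotProduct_mulVec]
        _ = -(star zc ⬝ᵥ (Sc *ᵥ zc)) := by
            rw [hScH, Matrix.neg_mulVec, dotProduct_neg]
    have h : (star zc ⬝ᵥ (Sc *ᵥ zc)).re = -(star zc ⬝ᵥ (Sc *ᵥ zc)).re := by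
      simpa using congrArg Complex.re hstar
    linarith
  set n1 : ℝ := ∑ i, Complex.normSq (zc i) with hn1def
  have hn1 : star zc ⬝ᵥ zc = (n1 : ℂ) := by
    rw [hn1def]
    push_cast
    simp [dotProduct, Complex.normSq_eq_conj_mul_self]
  have hn1nonneg : 0 ≤ n1 :=
    Finset.sum_nonneg fun i _ => Complex.normSq_nonneg _
  set n2 : ℂ := star xc ⬝ᵥ (Tc *ᵥ xc) with hn2def
  have hn2im : n2.im = 0 := by
    have hTcH : Tcᴴ = Tc := by
      ext i j
      have ht : T j i = T i j := by
        have := congrFun (congrFun hT i) j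
        simpa [Matrix.transpose_apply] using this
      simp [Matrix.conjTranspose_apply, Tc, Matrix.map_apply, ht]
    have hstar : star n2 = n2 := by
      calc star (star xc ⬝ᵥ (Tc *ᵥ xc))
          = star (Tc *ᵥ xc) ⬝ᵥ xc := by rw [star_dotProduct]; simp
        _ = (star xc ᵥ* Tcᴴ) ⬝ᵥ xc := by rw [Matrix.star_mulVec]
        _ = star xc ⬝ᵥ (Tcᴴ *ᵥ xc) := by rw [Matrix.dotProduct_mulVec]
        _ = star xc ⬝ᵥ (Tc *ᵥ xc) := by rw [hTcH]
    have h : -n2.im = n2.im := by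
      simpa using congrArg Complex.im hstar
    linarith
  have hn2re : 0 ≤ n2.re := by
    set a : Fin l → ℝ := fun j => (xc j).re with ha
    set b : Fin l → ℝ := fun j => (xc j).im with hb
    have hform : n2.re = a ⬝ᵥ T *ᵥ a + b ⬝ᵥ T *ᵥ b := by
      rw [hn2def]
      simp only [dotProduct, Matrix.mulVec, dotProduct, Complex.re_sum,
        Pi.star_apply, Finset.mul_sum, Tc, Matrix.map_apply,
        ← Finset.sum_add_distrib]
      refine Finset.sum_congr rfl fun j _ => ?_
      refine Finset.sum_congr rfl fun k _ => ?_
      simp only [Complex.mul_re, Complex.mul_im, Complex.ofReal_re,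
        Complex.ofReal_im, RCLike.star_def, Complex.conj_re, Complex.conj_im,
        a, b]
      ring
    rw [hform]
    have h1 := hTpsd a
    have h2 := hTpsd b
    linarith
  -- the D form is nonpositive
  have hDle : (star zc ⬝ᵥ (Dc *ᵥ zc)).re ≤ 0 := by
    have hform : star zc ⬝ᵥ (Dc *ᵥ zc)
        = ∑ i, (D i i : ℂ) * (Complex.normSq (zc i) : ℂ) := by
      simp only [dotProduct, Matrix.mulVec, dotProduct]
      refine Finset.sum_congr rfl fun i _ => ?_
      have hinner : ∑ j, Dc i j * zc j = (D i i : ℂ) * zc i := by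
        rw [Finset.sum_eq_single i]
        · simp [Dc, Matrix.map_apply]
        · intro j _ hj
          have h0 : D i j = 0 := hD (Ne.symm hj)
          simp [Dc, Matrix.map_apply, h0]
        · simp
      rw [hinner]
      rw [Complex.normSq_eq_conj_mul_self]
      simp only [Pi.star_apply, RCLike.star_def]
      ring
    rw [hform, Complex.re_sum]
    refine Finset.sum_nonpos fun i _ => ?_
    rw [← Complex.ofReal_mul, Complex.ofReal_re]
    exact mul_nonpos_of_nonpos_of_nonneg (hDneg i) (Complex.normSq_nonneg _)
  -- take real parts
  have hkeyre : μ.re * (n1 + n2.re) ≤ 0 := by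
    have h := congrArg Complex.re key
    rw [hn1] at h
    simp only [Complex.add_re, Complex.mul_re, Complex.ofReal_re,
      Complex.ofReal_im, Complex.conj_re, Complex.conj_im, hn2im, hSim] at h
    nlinarith [hDle]
  rcases lt_or_eq_of_le (add_nonneg hn1nonneg hn2re) with hE | hE
  · nlinarith
  · have hn1z : n1 = 0 := by linarith
    rw [hn1def] at hn1z
    have hzczero : zc = 0 := by
      funext i
      have h := (Finset.sum_eq_zero_iff_of_nonneg
        (fun i (_ : i ∈ Finset.univ) => Complex.normSq_nonneg (zc i))).mp
        hn1z i (Finset.mem_univ i)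
      exact Complex.normSq_eq_zero.mp h
    by_contra hpos
    push_neg at hpos
    have hμne : μ ≠ 0 := fun h => by simp [h] at hpos
    have hxzero : xc = 0 := by
      have h0 : μ • xc = 0 := by
        rw [← e2, hzczero, Matrix.mulVec_zero]
      funext j
      have hj := congrFun h0 j
      simp only [Pi.smul_apply, smul_eq_mul, Pi.zero_apply] at hj
      rcases mul_eq_zero.mp hj with h | h
      · exact absurd h hμne
      · exact h
    apply hv
    rw [hvel, hzczero, hxzero]
    funext i; cases i <;> rfl
end
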